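/- Let ρ be a density matrix and P an orthogonal projector with tr(Pρ) > 0. Then the fidelity between ρ and ρ' = PρP/tr(Pρ) equals √(tr(Pρ)), i.e., tr√(√ρ · ρ' · √ρ) = √(tr(Pρ)). -/

import Mathlib

open Matrix
open scoped Kronecker Matrix.Norms.L2Operator ComplexOrder

/-- The square root of a positive semidefinite matrix, as defined in the older Mathlib
(removed since). -/
noncomputable def Matrix.PosSemidef.sqrt {n : Type*} {𝕜 : Type*} [Fintype n] [RCLike 𝕜]
    [DecidableEq n] {A : Matrix n n 𝕜} (hA : A.PosSemidef) : Matrix n n 𝕜 :=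
  (hA.1.eigenvectorUnitary : Matrix n n 𝕜) * diagonal (((↑) : ℝ → 𝕜) ∘ (√·) ∘ hA.1.eigenvalues) *
    (star hA.1.eigenvectorUnitary : Matrix n n 𝕜)

noncomputable section

/-- Trace norm `‖A‖₁ = tr √(Aᴴ A)`. -/
noncomputable def traceNorm {m : ℕ} (A : Matrix (Fin m) (Fin m) ℂ) : ℝ :=
  ((Matrix.posSemidef_conjTranspose_mul_self A).sqrt.trace).re

/-- Quadratic form `Re ⟨v, H v⟩`. -/
noncomputable def quadForm {m : Type*} [Fintype m] (H : Matrix m m ℂ) (v : m → ℂ) : ℝ :=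
  (dotProduct (star v) (H *ᵥ v)).re

/-- Squared Euclidean norm of a vector. -/
noncomputable def vnormSq {m : Type*} [Fintype m] (v : m → ℂ) : ℝ :=
  (dotProduct (star v) v).re

/-! A projector is positive semidefinite, so with `S = √ρ` the matrix `S P S` is too, and its
square is `S (P ρ P) S`. Uniqueness of positive square roots gives
`√(S ρ' S) = tr(Pρ)^(-1/2) • S P S`, and `tr(S P S) = tr(P ρ)` by cyclicity, whence the fidelity
is `tr(Pρ)^(-1/2) · tr(Pρ) = √tr(Pρ)`. -/

open scoped MatrixOrder

namespace Matrix.PosSemidef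

variable {n 𝕜 : Type*} [Fintype n] [DecidableEq n] [RCLike 𝕜] {A B : Matrix n n 𝕜}

lemma sqrt_eq_cfcSqrt (hA : A.PosSemidef) : hA.sqrt = CFC.sqrt A := by
  rw [CFC.sqrt_eq_real_sqrt A hA.nonneg, cfcₙ_eq_cfc (hf0 := Real.sqrt_zero), hA.1.cfc_eq]
  simp [IsHermitian.cfc, Matrix.PosSemidef.sqrt]

lemma sqrt_mul_self (hA : A.PosSemidef) : hA.sqrt * hA.sqrt = A := by
  rw [hA.sqrt_eq_cfcSqrt]
  exact CFC.sqrt_mul_sqrt_self A hA.nonneg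

lemma posSemidef_sqrt (hA : A.PosSemidef) : hA.sqrt.PosSemidef := by
  rw [hA.sqrt_eq_cfcSqrt]
  exact (CFC.sqrt_nonneg A).posSemidef

lemma sqrt_eq_of_sq_eq (hA : A.PosSemidef) (hB : B.PosSemidef) (h : B ^ 2 = A) :
    hA.sqrt = B := by
  rw [hA.sqrt_eq_cfcSqrt]
  exact CFC.sqrt_unique (by rw [← sq, h]) hB.nonneg

lemma posSemidef_sqrt_mul_mul_sqrt (hA : A.PosSemidef) (hB : B.PosSemidef) :
    (hA.sqrt * B * hA.sqrt).PosSemidef := by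
  have h := hB.conjTranspose_mul_mul_same hA.sqrt
  rwa [hA.posSemidef_sqrt.isHermitian.eq] at h

lemma sqrt_mul_mul_sqrt_sq (hA : A.PosSemidef) (P : Matrix n n 𝕜) :
    (hA.sqrt * P * hA.sqrt) ^ 2 = hA.sqrt * (P * A * P) * hA.sqrt := by
  calc (hA.sqrt * P * hA.sqrt) ^ 2 = hA.sqrt * (P * (hA.sqrt * hA.sqrt) * P) * hA.sqrt := by
        noncomm_ring
    _ = hA.sqrt * (P * A * P) * hA.sqrt := by rw [hA.sqrt_mul_self]

lemma trace_sqrt_mul_mul_sqrt (hA : A.PosSemidef) (P : Matrix n n 𝕜) :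
    (hA.sqrt * P * hA.sqrt).trace = (P * A).trace := by
  rw [trace_mul_cycle, hA.sqrt_mul_self, trace_mul_comm]

end Matrix.PosSemidef

theorem fidelity_projected_state_general {n : ℕ} (ρ P ρ' : Matrix (Fin n) (Fin n) ℂ)
    (hρ : ρ.PosSemidef)
    (hPherm : P.IsHermitian) (hPidem : P * P = P)
    (hρ' : ρ' = ((P * ρ).trace)⁻¹ • (P * ρ * P))
    (hpsd : (hρ.sqrt * ρ' * hρ.sqrt).PosSemidef) :
    (hpsd.sqrt.trace).re = Real.sqrt (((P * ρ).trace).re) := by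
  set S := hρ.sqrt
  set u := ((P * ρ).trace).re
  have hP : P.PosSemidef := (IsStarProjection.nonneg ⟨hPidem, hPherm⟩).posSemidef
  have hA : (S * P * S).PosSemidef := hρ.posSemidef_sqrt_mul_mul_sqrt hP
  have htr_nonneg : 0 ≤ (P * ρ).trace := hρ.trace_sqrt_mul_mul_sqrt P ▸ hA.trace_nonneg
  have hu : (P * ρ).trace = u := Complex.eq_re_of_ofReal_le (by rwa [Complex.ofReal_zero])
  have hu0 : 0 ≤ u := Complex.zero_le_real.mp (hu ▸ htr_nonneg)
  have hsq : ((((√u)⁻¹ : ℝ) : ℂ) • (S * P * S)) ^ 2 = S * ρ' * S := by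
    have hc : (((√u)⁻¹ : ℝ) : ℂ) ^ 2 = (u : ℂ)⁻¹ := by
      rw [← Complex.ofReal_pow, inv_pow, Real.sq_sqrt hu0, Complex.ofReal_inv]
    rw [hρ', hu, smul_pow, hc, hρ.sqrt_mul_mul_sqrt_sq, Matrix.mul_smul, Matrix.smul_mul]
  rw [hpsd.sqrt_eq_of_sq_eq (hA.smul (Complex.zero_le_real.mpr (by positivity))) hsq, trace_smul,
    hρ.trace_sqrt_mul_mul_sqrt, hu, smul_eq_mul, ← Complex.ofReal_mul, Complex.ofReal_re,
    inv_mul_eq_div, Real.div_sqrt]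

/-- fidelity between `ρ` and `ρ' = PρP/tr(Pρ)` equals `√(tr(Pρ))`, i.e.
`tr √(√ρ · ρ' · √ρ) = √(tr(Pρ))`. -/
theorem fidelity_projected_state {n : ℕ} (ρ P ρ' : Matrix (Fin n) (Fin n) ℂ)
    (hρ : ρ.PosSemidef) (hρ1 : ρ.trace = 1)
    (hPherm : P.IsHermitian) (hPidem : P * P = P)
    (hPρ : 0 < ((P * ρ).trace).re)
    (hρ' : ρ' = ((P * ρ).trace)⁻¹ • (P * ρ * P))
    (hpsd : (hρ.sqrt * ρ' * hρ.sqrt).PosSemidef) :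
    (hpsd.sqrt.trace).re = Real.sqrt (((P * ρ).trace).re) :=
  fidelity_projected_state_general ρ P ρ' hρ hPherm hPidem hρ' hpsd
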